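/- arXiv:1902.02090 — 4 statements merged into one kernel-verified Lean document; each statement's English description precedes it below -/
import Mathlib

section
/- Fix |h_k|^2 > 0, |h_n|^2 > 0 with |h_n|^2 > |h_k|^2, σ^2 > 0, P_t ∈ [0,1), and constants R̃_n, R̃_k ∈ ℝ. Then Δ(γ) = (R_n(γ) + R_k(γ))(1 − P_t) − R̃_n − R̃_k is strictly increasing in γ on [0,1]. -/
/-- With `|h_n|² > |h_k|²`, the lower bound
`Δ(γ) = (R_n(γ) + R_k(γ))(1 − P_t) − R̃_n − R̃_k` of the sum-rate gain of NOMA over OMA is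
strictly increasing in the SIC user's power ratio `γ` on `[0,1]`. -/
theorem noma_delta_strictMonoOn (hk2 hn2 σ2 Pt Rno Rko : ℝ) (hhk : 0 < hk2) (hhn : 0 < hn2)
    (hkn : hk2 < hn2) (hσ : 0 < σ2) (hPt0 : 0 ≤ Pt) (hPt1 : Pt < 1) :
    StrictMonoOn
      (fun γ : ℝ =>
        (Real.logb 2 (1 + hn2 * γ / σ2) +
            Real.logb 2 (1 + hk2 * (1 - γ) / (hk2 * γ + σ2))) * (1 - Pt) - Rno - Rko)
      (Set.Icc 0 1) := by
  intro x hx y hy hxy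
  obtain ⟨hx0, hx1⟩ := hx
  obtain ⟨hy0, hy1⟩ := hy
  simp only
  have hPt : 0 < 1 - Pt := by linarith
  have hdx : 0 < hk2 * x + σ2 := by nlinarith
  have hdy : 0 < hk2 * y + σ2 := by nlinarith
  have hax : 0 < 1 + hn2 * x / σ2 := by positivity
  have hay : 0 < 1 + hn2 * y / σ2 := by positivity
  have hbx : 0 < 1 + hk2 * (1 - x) / (hk2 * x + σ2) := by
    have : 0 ≤ hk2 * (1 - x) / (hk2 * x + σ2) := by
      apply div_nonneg _ hdx.le; nlinarith
    linarith
  have hby : 0 < 1 + hk2 * (1 - y) / (hk2 * y + σ2) := by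
    have : 0 ≤ hk2 * (1 - y) / (hk2 * y + σ2) := by
      apply div_nonneg _ hdy.le; nlinarith
    linarith
  have key : (1 + hn2 * x / σ2) * (1 + hk2 * (1 - x) / (hk2 * x + σ2)) <
      (1 + hn2 * y / σ2) * (1 + hk2 * (1 - y) / (hk2 * y + σ2)) := by
    rw [one_add_div hσ.ne', one_add_div hdx.ne', one_add_div hσ.ne', one_add_div hdy.ne',
      div_mul_div_comm, div_mul_div_comm, div_lt_div_iff₀ (by positivity) (by positivity)]
    nlinarith [mul_pos (mul_pos (mul_pos (mul_pos hσ hσ) (by linarith : (0:ℝ) < hk2 + σ2))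
      (sub_pos.mpr hxy)) (sub_pos.mpr hkn)]
  have hlog : Real.logb 2 (1 + hn2 * x / σ2) +
      Real.logb 2 (1 + hk2 * (1 - x) / (hk2 * x + σ2)) <
      Real.logb 2 (1 + hn2 * y / σ2) +
      Real.logb 2 (1 + hk2 * (1 - y) / (hk2 * y + σ2)) := by
    rw [← Real.logb_mul hax.ne' hbx.ne', ← Real.logb_mul hay.ne' hby.ne']
    exact Real.logb_lt_logb one_lt_two (by positivity) key
  have := mul_lt_mul_of_pos_right hlog hPt
  linarith
end

section
/- (Theorem 1, rate-constraint structure.) Fix |h_k|^2 > 0, |h_n|^2 > 0 with |h_n|^2 > |h_k|^2, σ^2 > 0, P_t ∈ [0,1), constants R̃_n, R̃_k ∈ ℝ, and a rate threshold R̃_t with 0 ≤ R̃_t ≤ log₂(1 + |h_k|^2/σ^2). Let γ^R = ((|h_k|^2/σ^2) − (2^{R̃_t} − 1)) / (2^{R̃_t} · |h_k|^2/σ^2). Then the constraint set I_R = {γ ∈ [0,1] : R_k(γ) ≥ R̃_t} equals the interval [0, γ^R], and for every c ∈ [0,1] the function Δ attains its maximum over the (nonempty) set [0,c] ∩ I_R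 uniquely at the point min(c, γ^R). -/
/-- Non-SIC user's NOMA rate as a function of the SIC user's power ratio `γ`. -/
noncomputable def Rk (hk2 σ2 γ : ℝ) : ℝ :=
  Real.logb 2 (1 + hk2 * (1 - γ) / (hk2 * γ + σ2))

/-- SIC user's NOMA rate as a function of its power ratio `γ`. -/
noncomputable def Rn (hn2 σ2 γ : ℝ) : ℝ :=
  Real.logb 2 (1 + hn2 * γ / σ2)

/-- Lower bound of the sum-rate gain of NOMA over OMA. -/
noncomputable def Δfun (hk2 hn2 σ2 Pt Rno Rko γ : ℝ) : ℝ :=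
  (Rn hn2 σ2 γ + Rk hk2 σ2 γ) * (1 - Pt) - Rno - Rko

/-- (Theorem 1, rate-constraint structure.)  With `γ^R = ((hk2/σ2) − (2^{R̃_t}−1))/(2^{R̃_t}·hk2/σ2)`,
the rate-constraint set `I_R = {γ ∈ [0,1] : R_k(γ) ≥ R̃_t}` equals `[0, γ^R]`, and for every
`c ∈ [0,1]` the function `Δ` attains its maximum over `[0,c] ∩ I_R` uniquely at `min c γ^R`. -/
theorem noma_rate_constraint_structure (hk2 hn2 σ2 Pt Rno Rko Rt : ℝ)
    (hhk : 0 < hk2) (hhn : 0 < hn2) (hkn : hk2 < hn2) (hσ : 0 < σ2)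
    (hPt0 : 0 ≤ Pt) (hPt1 : Pt < 1)
    (hRt0 : 0 ≤ Rt) (hRt1 : Rt ≤ Real.logb 2 (1 + hk2 / σ2)) :
    {γ : ℝ | γ ∈ Set.Icc (0 : ℝ) 1 ∧ Rt ≤ Rk hk2 σ2 γ} =
      Set.Icc 0 ((hk2 / σ2 - ((2 : ℝ) ^ Rt - 1)) / ((2 : ℝ) ^ Rt * (hk2 / σ2))) ∧
    ∀ c ∈ Set.Icc (0 : ℝ) 1,
      min c ((hk2 / σ2 - ((2 : ℝ) ^ Rt - 1)) / ((2 : ℝ) ^ Rt * (hk2 / σ2))) ∈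
        Set.Icc (0 : ℝ) c ∩ {γ : ℝ | γ ∈ Set.Icc (0 : ℝ) 1 ∧ Rt ≤ Rk hk2 σ2 γ} ∧
      ∀ γ ∈ Set.Icc (0 : ℝ) c ∩ {γ : ℝ | γ ∈ Set.Icc (0 : ℝ) 1 ∧ Rt ≤ Rk hk2 σ2 γ},
        γ ≠ min c ((hk2 / σ2 - ((2 : ℝ) ^ Rt - 1)) / ((2 : ℝ) ^ Rt * (hk2 / σ2))) →
          Δfun hk2 hn2 σ2 Pt Rno Rko γ <
            Δfun hk2 hn2 σ2 Pt Rno Rko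
              (min c ((hk2 / σ2 - ((2 : ℝ) ^ Rt - 1)) / ((2 : ℝ) ^ Rt * (hk2 / σ2)))) := by

  have ht0 : (0:ℝ) < (2:ℝ) ^ Rt := Real.rpow_pos_of_pos two_pos Rt
  have ht1 : (1:ℝ) ≤ (2:ℝ) ^ Rt := by
    calc (1:ℝ) = (2:ℝ) ^ (0:ℝ) := by norm_num
    _ ≤ (2:ℝ) ^ Rt := Real.rpow_le_rpow_of_exponent_le one_le_two hRt0
  have hta : (2:ℝ) ^ Rt ≤ 1 + hk2 / σ2 := by
    have h := Real.rpow_le_rpow_of_exponent_le one_le_two hRt1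
    rwa [Real.rpow_logb two_pos (by norm_num)
      (by positivity : (0:ℝ) < 1 + hk2 / σ2)] at h
  set t := (2:ℝ) ^ Rt with ht_def
  set γR := (hk2 / σ2 - (t - 1)) / (t * (hk2 / σ2)) with hγR_def
  have ha : 0 < hk2 / σ2 := div_pos hhk hσ
  have hγR0 : 0 ≤ γR := div_nonneg (by linarith) (by positivity)
  have hγR1 : γR ≤ 1 := by
    rw [hγR_def, div_le_one (by positivity)]
    nlinarith [mul_nonneg (sub_nonneg.mpr ht1) ha.le]
  have hRkrw : ∀ γ : ℝ, 0 ≤ γ →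
      Rk hk2 σ2 γ = Real.logb 2 ((hk2 + σ2) / (hk2 * γ + σ2)) := by
    intro γ hγ
    have hD : 0 < hk2 * γ + σ2 := by positivity
    unfold Rk
    congr 1
    field_simp
    ring
  have hγReq : γR = (hk2 - (t - 1) * σ2) / (t * hk2) := by
    rw [hγR_def]
    field_simp
  have hmem : ∀ γ : ℝ, γ ∈ Set.Icc (0:ℝ) 1 → (Rt ≤ Rk hk2 σ2 γ ↔ γ ≤ γR) := by
    intro γ hγ
    have hD : 0 < hk2 * γ + σ2 := add_pos_of_nonneg_of_pos (mul_nonneg hhk.le hγ.1) hσ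
    rw [hRkrw γ hγ.1,
      Real.le_logb_iff_rpow_le one_lt_two (div_pos (by linarith) hD),
      le_div_iff₀ hD, hγReq, le_div_iff₀ (by positivity : 0 < t * hk2)]
    rw [← ht_def]
    constructor <;> intro h <;> nlinarith
  have hmono : ∀ x y : ℝ, 0 ≤ x → x < y → y ≤ 1 →
      Δfun hk2 hn2 σ2 Pt Rno Rko x < Δfun hk2 hn2 σ2 Pt Rno Rko y := by
    intro x y hx hxy hy1
    have hy0 : 0 ≤ y := le_trans hx hxy.le
    have hDx : 0 < hk2 * x + σ2 := add_pos_of_nonneg_of_pos (mul_nonneg hhk.le hx) hσ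
    have hDy : 0 < hk2 * y + σ2 := add_pos_of_nonneg_of_pos (mul_nonneg hhk.le hy0) hσ
    have hAx : 0 < 1 + hn2 * x / σ2 :=
      add_pos_of_pos_of_nonneg one_pos (div_nonneg (mul_nonneg hhn.le hx) hσ.le)
    have hAy : 0 < 1 + hn2 * y / σ2 :=
      add_pos_of_pos_of_nonneg one_pos (div_nonneg (mul_nonneg hhn.le hy0) hσ.le)
    have hBx : 0 < (hk2 + σ2) / (hk2 * x + σ2) := div_pos (by linarith) hDx
    have hBy : 0 < (hk2 + σ2) / (hk2 * y + σ2) := div_pos (by linarith) hDy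
    have key : Rn hn2 σ2 x + Rk hk2 σ2 x < Rn hn2 σ2 y + Rk hk2 σ2 y := by
      rw [hRkrw x hx, hRkrw y (le_trans hx (le_of_lt hxy))]
      unfold Rn
      rw [← Real.logb_mul (ne_of_gt hAx) (ne_of_gt hBx),
        ← Real.logb_mul (ne_of_gt hAy) (ne_of_gt hBy)]
      apply Real.logb_lt_logb one_lt_two (mul_pos hAx hBx)
      have e1 : (1 + hn2 * x / σ2) * ((hk2 + σ2) / (hk2 * x + σ2))
          = ((σ2 + hn2 * x) * (hk2 + σ2)) / (σ2 * (hk2 * x + σ2)) := by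
        field_simp
      have e2 : (1 + hn2 * y / σ2) * ((hk2 + σ2) / (hk2 * y + σ2))
          = ((σ2 + hn2 * y) * (hk2 + σ2)) / (σ2 * (hk2 * y + σ2)) := by
        field_simp
      rw [e1, e2, div_lt_div_iff₀ (by positivity) (by positivity)]
      have key2 : (σ2 + hn2 * x) * (hk2 * y + σ2) < (σ2 + hn2 * y) * (hk2 * x + σ2) := by
        nlinarith [mul_pos (mul_pos hσ (sub_pos.mpr hxy)) (sub_pos.mpr hkn)]
      linarith [mul_lt_mul_of_pos_left key2 (mul_pos (by linarith : (0:ℝ) < hk2 + σ2) hσ)]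
    unfold Δfun
    have h1Pt : 0 < 1 - Pt := by linarith
    linarith [mul_lt_mul_of_pos_right key h1Pt]
  have hset : {γ : ℝ | γ ∈ Set.Icc (0 : ℝ) 1 ∧ Rt ≤ Rk hk2 σ2 γ} = Set.Icc 0 γR := by
    ext γ
    simp only [Set.mem_setOf_eq, Set.mem_Icc]
    constructor
    · rintro ⟨⟨h0, h1⟩, hr⟩
      exact ⟨h0, (hmem γ ⟨h0, h1⟩).1 hr⟩
    · rintro ⟨h0, hγ⟩
      have h1 : γ ≤ 1 := le_trans hγ hγR1
      exact ⟨⟨h0, h1⟩, (hmem γ ⟨h0, h1⟩).2 hγ⟩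
  refine ⟨hset, ?_⟩
  rintro c ⟨hc0, hc1⟩
  set m := min c γR with hm_def
  have hm0 : 0 ≤ m := le_min hc0 hγR0
  have hmc : m ≤ c := min_le_left _ _
  have hm1 : m ≤ 1 := le_trans hmc hc1
  have hmIcc : m ∈ Set.Icc (0:ℝ) 1 := ⟨hm0, hm1⟩
  have hmR : Rt ≤ Rk hk2 σ2 m := (hmem m hmIcc).2 (min_le_right _ _)
  refine ⟨⟨⟨hm0, hmc⟩, hmIcc, hmR⟩, ?_⟩
  rintro γ ⟨⟨hγ0, hγc⟩, hγ01, hγr⟩ hne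
  have hγR' : γ ≤ γR := (hmem γ hγ01).1 hγr
  have hγm : γ ≤ m := le_min hγc hγR'
  have hlt : γ < m := lt_of_le_of_ne hγm hne
  exact hmono γ m hγ0 hlt hm1
end

section
/- Fix γ ∈ (0,1), σ^2 > 0, P_t ∈ [0,1), and a constant C ∈ ℝ, and let G(x) = (1 − P_t) log₂((x + σ^2)/(γ x + σ^2)) − (1/2) log₂(1 + x/σ^2) + C. Suppose x* := σ^2 (1 − 2γ − 2P_t + 2γ P_t)/γ > 0. Then G is strictly increasing on [0, x*] and strictly decreasing on [x*, ∞); in particular x* is the unique global maximizer of G on [0, ∞). -/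
/-!
On `[0, ∞)` the derivative of the bound is `γ (x* - x) / (2 log 2 (x + σ²) (γ x + σ²))`, a positive
multiple of `x* - x`: `x*` is where the slope `(1 - P_t) (1/(x + σ²) - γ/(γ x + σ²))` of the NOMA
term equals the slope `1/(2 (x + σ²))` of the OMA term (both up to the factor `1 / log 2`). So the
bound increases strictly up to `x*` and decreases strictly after it.
-/

open Real Set

section Unimodal

variable {f f' : ℝ → ℝ} {a m : ℝ}

theorem strictMonoOn_Icc_of_hasDerivAt_pos (hf : ∀ x ∈ Icc a m, HasDerivAt f (f' x) x)
    (hf' : ∀ x ∈ Ioo a m, 0 < f' x) : StrictMonoOn f (Icc a m) := by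
  refine strictMonoOn_of_hasDerivWithinAt_pos (f' := f') (convex_Icc a m)
    (fun x hx ↦ (hf x hx).continuousAt.continuousWithinAt) (fun x hx ↦ ?_) ?_
  · rw [interior_Icc] at hx ⊢
    exact (hf x (Ioo_subset_Icc_self hx)).hasDerivWithinAt
  · simpa only [interior_Icc] using hf'

theorem strictAntiOn_Ici_of_hasDerivAt_neg (hf : ∀ x ∈ Ici m, HasDerivAt f (f' x) x)
    (hf' : ∀ x ∈ Ioi m, f' x < 0) : StrictAntiOn f (Ici m) := by
  refine strictAntiOn_of_hasDerivWithinAt_neg (f' := f') (convex_Ici m)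
    (fun x hx ↦ (hf x hx).continuousAt.continuousWithinAt) (fun x hx ↦ ?_) ?_
  · rw [interior_Ici] at hx ⊢
    exact (hf x (Ioi_subset_Ici_self hx)).hasDerivWithinAt
  · simpa only [interior_Ici] using hf'

theorem StrictMonoOn.lt_of_strictAntiOn_Ici (hmono : StrictMonoOn f (Icc a m))
    (hanti : StrictAntiOn f (Ici m)) {x : ℝ} (hax : a ≤ x) (hxm : x ≠ m) : f x < f m := by
  rcases hxm.lt_or_gt with hlt | hgt
  · exact hmono ⟨hax, hlt.le⟩ ⟨hax.trans hlt.le, le_rfl⟩ hlt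
  · exact hanti self_mem_Ici hgt.le hgt

end Unimodal

noncomputable def nomaGainLowerBound (γ σ2 Pt C x : ℝ) : ℝ :=
  (1 - Pt) * logb 2 ((x + σ2) / (γ * x + σ2)) - (1 / 2) * logb 2 (1 + x / σ2) + C

noncomputable def nomaOptimalChannelGain (γ σ2 Pt : ℝ) : ℝ :=
  σ2 * (1 - 2 * γ - 2 * Pt + 2 * γ * Pt) / γ

theorem hasDerivAt_nomaGainLowerBound {γ σ2 Pt x : ℝ} (C : ℝ) (hγ : γ ≠ 0) (hσ : σ2 ≠ 0)
    (hx₁ : x + σ2 ≠ 0) (hx₂ : γ * x + σ2 ≠ 0) :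
    HasDerivAt (nomaGainLowerBound γ σ2 Pt C)
      (γ * (nomaOptimalChannelGain γ σ2 Pt - x) / (2 * log 2 * (x + σ2) * (γ * x + σ2))) x := by
  have hnum : HasDerivAt (fun y ↦ y + σ2) 1 x := (hasDerivAt_id x).add_const σ2
  have hden : HasDerivAt (fun y ↦ γ * y + σ2) γ x := by
    simpa using ((hasDerivAt_id x).const_mul γ).add_const σ2
  have hratio := (hnum.div hden hx₂).log (div_ne_zero hx₁ hx₂)
  have hsnr : HasDerivAt (fun y ↦ 1 + y / σ2) (1 / σ2) x := by
    simpa using ((hasDerivAt_id x).div_const σ2).const_add 1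
  have hsnr_ne : 1 + x / σ2 ≠ 0 := by
    rw [one_add_div hσ]
    exact div_ne_zero (by rwa [add_comm]) hσ
  have := (((hratio.div_const (log 2)).const_mul (1 - Pt)).sub
    (((hsnr.log hsnr_ne).div_const (log 2)).const_mul (1 / 2))).add_const C
  refine this.congr_deriv ?_
  have hlog : log 2 ≠ 0 := by positivity
  simp only [nomaOptimalChannelGain, Pi.div_apply]
  rw [add_comm (1 : ℝ), div_add_one hσ]
  field_simp
  ring

theorem noma_nonsic_user_gain_unique_max_general (γ σ2 Pt C : ℝ) (hγ0 : 0 < γ) (hσ : 0 < σ2)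
    (hxstar : 0 < σ2 * (1 - 2 * γ - 2 * Pt + 2 * γ * Pt) / γ) :
    StrictMonoOn
      (fun x : ℝ =>
        (1 - Pt) * Real.logb 2 ((x + σ2) / (γ * x + σ2)) -
          (1 / 2) * Real.logb 2 (1 + x / σ2) + C)
      (Set.Icc 0 (σ2 * (1 - 2 * γ - 2 * Pt + 2 * γ * Pt) / γ)) ∧
    StrictAntiOn
      (fun x : ℝ =>
        (1 - Pt) * Real.logb 2 ((x + σ2) / (γ * x + σ2)) -
          (1 / 2) * Real.logb 2 (1 + x / σ2) + C)
      (Set.Ici (σ2 * (1 - 2 * γ - 2 * Pt + 2 * γ * Pt) / γ)) ∧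
    ∀ x ∈ Set.Ici (0 : ℝ), x ≠ σ2 * (1 - 2 * γ - 2 * Pt + 2 * γ * Pt) / γ →
      ((1 - Pt) * Real.logb 2 ((x + σ2) / (γ * x + σ2)) -
          (1 / 2) * Real.logb 2 (1 + x / σ2) + C) <
        ((1 - Pt) * Real.logb 2
              ((σ2 * (1 - 2 * γ - 2 * Pt + 2 * γ * Pt) / γ + σ2) /
                (γ * (σ2 * (1 - 2 * γ - 2 * Pt + 2 * γ * Pt) / γ) + σ2)) -
            (1 / 2) * Real.logb 2 (1 + σ2 * (1 - 2 * γ - 2 * Pt + 2 * γ * Pt) / γ / σ2) + C) := by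
  have hderiv (x : ℝ) (hx : 0 ≤ x) :
      HasDerivAt (nomaGainLowerBound γ σ2 Pt C) (γ * (nomaOptimalChannelGain γ σ2 Pt - x) /
        (2 * log 2 * (x + σ2) * (γ * x + σ2))) x :=
    hasDerivAt_nomaGainLowerBound C hγ0.ne' hσ.ne' (by positivity) (by positivity)
  have hdenom (x : ℝ) (hx : 0 ≤ x) : 0 < 2 * log 2 * (x + σ2) * (γ * x + σ2) := by positivity
  have hmono := strictMonoOn_Icc_of_hasDerivAt_pos (fun x hx ↦ hderiv x hx.1) fun x hx ↦
    div_pos (mul_pos hγ0 (sub_pos.2 hx.2)) (hdenom x hx.1.le)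
  have hanti := strictAntiOn_Ici_of_hasDerivAt_neg (fun x hx ↦ hderiv x (hxstar.le.trans hx))
    fun x hx ↦ div_neg_of_neg_of_pos (mul_neg_of_pos_of_neg hγ0 (sub_neg.2 hx))
      (hdenom x (hxstar.le.trans hx.le))
  exact ⟨hmono, hanti, fun x hx hne ↦ hmono.lt_of_strictAntiOn_Ici hanti hx hne⟩

/-- For `G(x) = (1 − P_t) log₂((x + σ2)/(γx + σ2)) − (1/2) log₂(1 + x/σ2) + C`, if
`x* = σ2(1 − 2γ − 2P_t + 2γP_t)/γ > 0`, then `G` is strictly increasing on `[0, x*]`,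
strictly decreasing on `[x*, ∞)`, and `x*` is the unique global maximizer of `G` on
`[0, ∞)`. -/
theorem noma_nonsic_user_gain_unique_max (γ σ2 Pt C : ℝ) (hγ0 : 0 < γ) (hγ1 : γ < 1)
    (hσ : 0 < σ2) (hPt0 : 0 ≤ Pt) (hPt1 : Pt < 1)
    (hxstar : 0 < σ2 * (1 - 2 * γ - 2 * Pt + 2 * γ * Pt) / γ) :
    StrictMonoOn
      (fun x : ℝ =>
        (1 - Pt) * Real.logb 2 ((x + σ2) / (γ * x + σ2)) -
          (1 / 2) * Real.logb 2 (1 + x / σ2) + C)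
      (Set.Icc 0 (σ2 * (1 - 2 * γ - 2 * Pt + 2 * γ * Pt) / γ)) ∧
    StrictAntiOn
      (fun x : ℝ =>
        (1 - Pt) * Real.logb 2 ((x + σ2) / (γ * x + σ2)) -
          (1 / 2) * Real.logb 2 (1 + x / σ2) + C)
      (Set.Ici (σ2 * (1 - 2 * γ - 2 * Pt + 2 * γ * Pt) / γ)) ∧
    ∀ x ∈ Set.Ici (0 : ℝ), x ≠ σ2 * (1 - 2 * γ - 2 * Pt + 2 * γ * Pt) / γ →
      ((1 - Pt) * Real.logb 2 ((x + σ2) / (γ * x + σ2)) -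
          (1 / 2) * Real.logb 2 (1 + x / σ2) + C) <
        ((1 - Pt) * Real.logb 2
              ((σ2 * (1 - 2 * γ - 2 * Pt + 2 * γ * Pt) / γ + σ2) /
                (γ * (σ2 * (1 - 2 * γ - 2 * Pt + 2 * γ * Pt) / γ) + σ2)) -
            (1 / 2) * Real.logb 2 (1 + σ2 * (1 - 2 * γ - 2 * Pt + 2 * γ * Pt) / γ / σ2) + C) :=
  noma_nonsic_user_gain_unique_max_general γ σ2 Pt C hγ0 hσ hxstar
end

section
/- (General pairwise likelihood-comparison probability, Eq. (26).) Fix σ > 0, h ∈ ℂ with h ≠ 0, positive integers N_k, N, a transmitted composite symbol s₀ ∈ ℂ, and candidate symbols s₁, s₂, s_n ∈ ℂ with d := s₂ − s₁ + s_n ≠ 0. Let W_r and W_i be independent real random variables each distributed as a centered Gaussian with variance σ^2/2, let w = W_r + i·W_i, and let y = h s₀ + w. Define f_k(s₁) = (1/(π σ^2 N_k)) exp(−|y − h s₁|^2/σ^2) and f(s₂, s_n) = (1/(π σ^2 N)) exp(−|y − h(s₂ + s_n)|^2/σ^2). Then the probability of the event { f_k(s₁) < f(s₂, s_n) } equals Q(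 ( σ^2 ln(N/N_k) + |h|^2(|s₂ + s_n|^2 − |s₁|^2) − 2 Re{ |h|^2 s₀ · conj(d) } ) / sqrt( 2 σ^2 |h d|^2 ) ), where Q(x) = 1 − Φ(x) and Φ is the standard normal cumulative distribution function. -/
open MeasureTheory ProbabilityTheory Complex
open scoped NNReal ComplexConjugate

/-!
Taking logarithms, `f_k(s₁) < f(s₂, s_n)` becomes
`σ² ln(N/N_k) < |y - h s₁|² - |y - h(s₂ + s_n)|²`. Expanding the squares with `y = h s₀ + w`,
the only random term on the right is `2 Re(w conj(h d)) = 2 (Re(h d) W_r + Im(h d) W_i)`, a centered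
Gaussian of variance `2 σ² |h d|²` by independence of `W_r` and `W_i`. The event is therefore a
Gaussian tail, i.e. a value of `Q`.
-/

namespace ProbabilityTheory

lemma gaussianReal_real_Ioi {m : ℝ} {v : ℝ≥0} (hv : v ≠ 0) (T : ℝ) :
    (gaussianReal m v).real (Set.Ioi T) = 1 - cdf (gaussianReal 0 1) ((T - m) / √v) := by
  have hsqrt : 0 < √(v : ℝ) := Real.sqrt_pos.mpr (by positivity)
  have hstd : (gaussianReal m v).map (fun x ↦ (x - m) / √v) = gaussianReal 0 1 := by
    rw [show (fun x ↦ (x - m) / √v) = (· / √v) ∘ (· - m) from rfl,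
      ← Measure.map_map (by fun_prop) (by fun_prop), gaussianReal_map_sub_const,
      gaussianReal_map_div_const, sub_self, zero_div]
    congr 1
    ext
    simp [Real.sq_sqrt v.coe_nonneg, hv]
  have hpre : (fun x ↦ (x - m) / √v) ⁻¹' Set.Ioi ((T - m) / √v) = Set.Ioi T := by
    ext x
    simp [div_lt_div_iff_of_pos_right hsqrt]
  rw [← hpre, ← map_measureReal_apply (by fun_prop) measurableSet_Ioi, hstd, ← Set.compl_Iic,
    probReal_compl_eq_one_sub measurableSet_Iic, cdf_eq_real]

lemma map_const_mul_add_const_mul_eq_gaussianReal {Ω : Type*} [MeasurableSpace Ω]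
    {P : Measure Ω} {X Y : Ω → ℝ} (hX : Measurable X) (hY : Measurable Y) (hXY : IndepFun X Y P)
    {m₁ m₂ : ℝ} {v₁ v₂ : ℝ≥0} (hXd : P.map X = gaussianReal m₁ v₁)
    (hYd : P.map Y = gaussianReal m₂ v₂) (a b : ℝ) :
    P.map (fun ω ↦ a * X ω + b * Y ω) =
      gaussianReal (a * m₁ + b * m₂)
        (NNReal.mk (a ^ 2) (sq_nonneg a) * v₁ + NNReal.mk (b ^ 2) (sq_nonneg b) * v₂) := by
  have hmul {Z : Ω → ℝ} (hZ : Measurable Z) {m : ℝ} {v : ℝ≥0} (hZd : P.map Z = gaussianReal m v)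
      (c : ℝ) :
      P.map (fun ω ↦ c * Z ω) = gaussianReal (c * m) (NNReal.mk (c ^ 2) (sq_nonneg c) * v) := by
    rw [← Function.comp_def (c * ·) Z, ← Measure.map_map (by fun_prop) hZ, hZd,
      gaussianReal_map_const_mul]
  exact gaussianReal_add_gaussianReal_of_indepFun
    (hXY.comp (measurable_const_mul a) (measurable_const_mul b)) (hmul hX hXd a) (hmul hY hYd b)

lemma map_re_mul_conj_eq_gaussianReal {Ω : Type*} [MeasurableSpace Ω]
    {P : Measure Ω} {Wr Wi : Ω → ℝ} (hWr : Measurable Wr) (hWi : Measurable Wi)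
    (hindep : IndepFun Wr Wi P) {v : ℝ≥0} (hWrd : P.map Wr = gaussianReal 0 v)
    (hWid : P.map Wi = gaussianReal 0 v) (z : ℂ) :
    P.map (fun ω ↦ ((Wr ω + Wi ω * I) * conj z).re) = gaussianReal 0 (‖z‖₊ ^ 2 * v) := by
  have hre : (fun ω ↦ ((Wr ω + Wi ω * I) * conj z).re) = fun ω ↦ z.re * Wr ω + z.im * Wi ω := by
    ext ω
    simp only [mul_re, add_re, add_im, ofReal_re, ofReal_im, mul_im, I_re, I_im, conj_re, conj_im]
    ring
  rw [hre, map_const_mul_add_const_mul_eq_gaussianReal hWr hWi hindep hWrd hWid, mul_zero,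
    mul_zero, add_zero, ← add_mul]
  congr 2
  ext
  simp only [NNReal.coe_add, NNReal.coe_mk, NNReal.coe_pow, coe_nnnorm, Complex.sq_norm,
    normSq_apply]
  ring

end ProbabilityTheory

lemma likelihood_lt_likelihood_iff {σ Nk N : ℝ} (hσ : σ ≠ 0) (hNk : 0 < Nk) (hN : 0 < N)
    (A B : ℝ) :
    1 / (Real.pi * σ ^ 2 * Nk) * Real.exp (-A / σ ^ 2) <
        1 / (Real.pi * σ ^ 2 * N) * Real.exp (-B / σ ^ 2) ↔
      σ ^ 2 * Real.log (N / Nk) < A - B := by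
  have hc (M : ℝ) (hM : 0 < M) (C : ℝ) : 1 / (Real.pi * σ ^ 2 * M) * Real.exp (-C / σ ^ 2) =
      Real.exp (-(Real.log (Real.pi * σ ^ 2) + Real.log M + C / σ ^ 2)) := by
    rw [Real.exp_neg, Real.exp_add, Real.exp_add, Real.exp_log (by positivity), Real.exp_log hM,
      neg_div, Real.exp_neg]
    field_simp
  rw [hc Nk hNk, hc N hN, Real.exp_lt_exp, Real.log_div hN.ne' hNk.ne',
    ← lt_div_iff₀' (by positivity), sub_div]
  constructor <;> intro hlt <;> linarith

lemma norm_sq_sub_sub_norm_sq_sub (h s₀ s₁ s w : ℂ) :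
    ‖h * s₀ + w - h * s₁‖ ^ 2 - ‖h * s₀ + w - h * s‖ ^ 2 =
      2 * (w * conj (h * (s - s₁))).re + 2 * (((‖h‖ : ℂ) ^ 2) * s₀ * conj (s - s₁)).re -
        ‖h‖ ^ 2 * (‖s‖ ^ 2 - ‖s₁‖ ^ 2) := by
  simp only [← ofReal_pow, Complex.sq_norm, normSq_apply, add_re, add_im, sub_re, sub_im, mul_re,
    mul_im, ofReal_re, ofReal_im, conj_re, conj_im]
  ring

/-- (General pairwise likelihood-comparison probability, Eq. (26).)  A composite symbol
`s₀` is sent through channel `h` with circularly-symmetric complex Gaussian noise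
`w = W_r + i W_i` of variance `σ²` (`W_r, W_i` independent real Gaussians of variance
`σ²/2`), giving `y = h s₀ + w`.  For candidate symbols `s₁, s₂, s_n` with
`d = s₂ − s₁ + s_n ≠ 0`, the probability that the SIC-hypothesis likelihood
`f(s₂, s_n) = (1/(πσ²N)) exp(−|y − h(s₂+s_n)|²/σ²)` exceeds the non-SIC-hypothesis
likelihood `f_k(s₁) = (1/(πσ²N_k)) exp(−|y − h s₁|²/σ²)` equals
`Q((σ² ln(N/N_k) + |h|²(|s₂+s_n|² − |s₁|²) − 2 Re{|h|² s₀ conj(d)}) / √(2σ²|h d|²))`,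
where `Q(x) = 1 − Φ(x)` with `Φ` the standard normal CDF. -/
theorem blind_classification_pairwise_error_probability
    {Ω : Type*} [MeasurableSpace Ω] (μ : Measure Ω) [IsProbabilityMeasure μ]
    (σ : ℝ) (hσ : 0 < σ) (h : ℂ) (hh : h ≠ 0)
    (Nk N : ℕ) (hNk : 0 < Nk) (hN : 0 < N)
    (s₀ s₁ s₂ sn : ℂ) (hd : s₂ - s₁ + sn ≠ 0)
    (Wr Wi : Ω → ℝ) (hWr : Measurable Wr) (hWi : Measurable Wi)
    (hWrd : μ.map Wr = gaussianReal 0 (σ ^ 2 / 2).toNNReal)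
    (hWid : μ.map Wi = gaussianReal 0 (σ ^ 2 / 2).toNNReal)
    (hindep : IndepFun Wr Wi μ) :
    (μ {ω : Ω |
        (1 / (Real.pi * σ ^ 2 * Nk)) *
            Real.exp
              (-‖(h * s₀ + (Wr ω + Wi ω * Complex.I)) - h * s₁‖ ^ 2 / σ ^ 2) <
          (1 / (Real.pi * σ ^ 2 * N)) *
            Real.exp
              (-‖(h * s₀ + (Wr ω + Wi ω * Complex.I)) - h * (s₂ + sn)‖ ^ 2 /
                σ ^ 2)}).toReal =
      1 - (cdf (gaussianReal 0 1))
        ((σ ^ 2 * Real.log ((N : ℝ) / Nk) +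
            ‖h‖ ^ 2 * (‖s₂ + sn‖ ^ 2 - ‖s₁‖ ^ 2) -
            2 * ((((‖h‖ : ℝ) : ℂ) ^ 2) * s₀ *
                (starRingEnd ℂ) (s₂ - s₁ + sn)).re) /
          Real.sqrt (2 * σ ^ 2 * ‖h * (s₂ - s₁ + sn)‖ ^ 2)) := by
  have hv : ‖h * (s₂ + sn - s₁)‖₊ ^ 2 * (σ ^ 2 / 2).toNNReal ≠ 0 := by
    have : s₂ + sn - s₁ ≠ 0 := by rwa [← sub_add_eq_add_sub]
    simp [hh, this, hσ]
  set T := σ ^ 2 * Real.log ((N : ℝ) / Nk) + ‖h‖ ^ 2 * (‖s₂ + sn‖ ^ 2 - ‖s₁‖ ^ 2) -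
    2 * ((((‖h‖ : ℝ) : ℂ) ^ 2) * s₀ * conj (s₂ + sn - s₁)).re
  have hevent : {ω : Ω |
        (1 / (Real.pi * σ ^ 2 * Nk)) *
            Real.exp (-‖(h * s₀ + (Wr ω + Wi ω * I)) - h * s₁‖ ^ 2 / σ ^ 2) <
          (1 / (Real.pi * σ ^ 2 * N)) *
            Real.exp (-‖(h * s₀ + (Wr ω + Wi ω * I)) - h * (s₂ + sn)‖ ^ 2 / σ ^ 2)} =
      (fun ω ↦ ((Wr ω + Wi ω * I) * conj (h * (s₂ + sn - s₁))).re) ⁻¹' Set.Ioi (T / 2) := by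
    ext ω
    rw [Set.mem_ofPred_eq, likelihood_lt_likelihood_iff hσ.ne' (by positivity) (by positivity),
      norm_sq_sub_sub_norm_sq_sub, Set.mem_preimage, Set.mem_Ioi]
    constructor <;> intro _ <;> linarith
  rw [sub_add_eq_add_sub, ← measureReal_def, hevent,
    ← map_measureReal_apply (by fun_prop) measurableSet_Ioi,
    map_re_mul_conj_eq_gaussianReal hWr hWi hindep hWrd hWid, gaussianReal_real_Ioi hv]
  congr 2
  rw [sub_zero, NNReal.coe_mul, Real.coe_toNNReal _ (by positivity), NNReal.coe_pow, coe_nnnorm,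
    show 2 * σ ^ 2 * ‖h * (s₂ + sn - s₁)‖ ^ 2 = 2 ^ 2 * (‖h * (s₂ + sn - s₁)‖ ^ 2 * (σ ^ 2 / 2))
      by ring, Real.sqrt_mul (sq_nonneg 2), Real.sqrt_sq zero_le_two, div_div]
end
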